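/- For any rooted tree with n ≥ 1 non-root nodes, IDI(T) ≤ ⌊(n+1)²/4⌋, i.e., the sum of root-to-leaf distances is at most (1 + ⌊(n−1)/2⌋)(n − ⌊(n−1)/2⌋). -/

import Mathlib

/-!
Every node `v` at level `h` lies on a path `v, parent v, …` of `h` distinct non-root nodes, and
only `v` itself can be a leaf on it. Hence the number `L` of leaves satisfies `h + L ≤ n + 1`,
every leaf is at level at most `n + 1 - L`, and `IDI ≤ L (n + 1 - L) ≤ ⌊(n + 1)² / 4⌋` by AM-GM.
-/

/-- A rooted tree with root `0` and non-root nodes `1, …, n`,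
given by a parent function that strictly decreases. -/
structure RTree (n : ℕ) where
  parent : ℕ → ℕ
  parent_lt : ∀ v, 0 < v → parent v < v

namespace RTree

variable {n : ℕ}

/-- Distance from the root to a node. -/
def level (T : RTree n) : ℕ → ℕ
  | 0 => 0
  | v + 1 => T.level (T.parent (v + 1)) + 1
  termination_by v => v
  decreasing_by exact T.parent_lt _ (Nat.succ_pos _)

/-- Depth: maximum distance from the root to any node. -/
def depth (T : RTree n) : ℕ := (Finset.Icc 1 n).sup T.level

/-- The set of nodes at distance exactly `k` from the root. -/
def levelSet (T : RTree n) (k : ℕ) : Finset ℕ :=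
  (Finset.Icc 1 n).filter (fun v => T.level v = k)

/-- Breadth: maximum size of a level set over positive levels. -/
def breadth (T : RTree n) : ℕ :=
  (Finset.Icc 1 n).sup (fun k => (T.levelSet k).card)

/-- Leaves: non-root nodes with no children. -/
def leaves (T : RTree n) : Finset ℕ :=
  (Finset.Icc 1 n).filter (fun v => (Finset.Icc 1 n).filter (fun w => T.parent w = v) = ∅)

/-- Influence Dispersion Index: sum of root-to-leaf distances. -/
def IDI (T : RTree n) : ℕ := ∑ l ∈ T.leaves, T.level l

/-- The children of a node. -/
def children (T : RTree n) (u : ℕ) : Finset ℕ :=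
  (Finset.Icc 1 n).filter (fun v => T.parent v = u)

end RTree

namespace RTree

open Finset

variable {n : ℕ} (T : RTree n)

lemma level_parent {v : ℕ} (hv : 0 < v) : T.level (T.parent v) + 1 = T.level v := by
  obtain ⟨w, rfl⟩ := Nat.exists_eq_succ_of_ne_zero hv.ne'
  rw [level]

lemma level_pos_iff {v : ℕ} : 0 < T.level v ↔ 0 < v := by
  refine ⟨fun h => Nat.pos_of_ne_zero ?_, fun hv => ?_⟩
  · rintro rfl
    simp [level] at h
  · rw [← T.level_parent hv]
    exact Nat.succ_pos _

lemma level_iterate_parent (v : ℕ) {i : ℕ} (hi : i ≤ T.level v) :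
    T.level (T.parent^[i] v) = T.level v - i := by
  induction i with
  | zero => rfl
  | succ i ih =>
    have hpos : 0 < T.parent^[i] v := T.level_pos_iff.1 (by omega)
    rw [Function.iterate_succ_apply', ← Nat.sub_sub, ← ih (by omega), ← T.level_parent hpos]
    rfl

lemma iterate_parent_le (v : ℕ) {i : ℕ} (hi : i ≤ T.level v) : T.parent^[i] v ≤ v := by
  induction i with
  | zero => rfl
  | succ i ih =>
    have hpos : 0 < T.parent^[i] v :=
      T.level_pos_iff.1 (by rw [T.level_iterate_parent v (by omega)]; omega)
    rw [Function.iterate_succ_apply']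
    exact (T.parent_lt _ hpos).le.trans (ih (by omega))

/-- `v` and its ancestors, the root excluded. -/
def pathToRoot (v : ℕ) : Finset ℕ :=
  (range (T.level v)).image (T.parent^[·] v)

lemma iterate_parent_mem_pathToRoot (v : ℕ) {i : ℕ} (hi : i < T.level v) :
    T.parent^[i] v ∈ T.pathToRoot v :=
  mem_image.2 ⟨i, mem_range.2 hi, rfl⟩

lemma card_pathToRoot (v : ℕ) : #(T.pathToRoot v) = T.level v := by
  rw [pathToRoot, card_image_of_injOn, card_range]
  intro i hi j hj hij
  have hi := mem_range.1 hi
  have hj := mem_range.1 hj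
  have := congrArg T.level hij
  simp only [T.level_iterate_parent v hi.le, T.level_iterate_parent v hj.le] at this
  omega

lemma pathToRoot_subset {v : ℕ} (hv : v ≤ n) : T.pathToRoot v ⊆ Icc 1 n := by
  intro u hu
  obtain ⟨i, hi, rfl⟩ := mem_image.1 hu
  have hi := mem_range.1 hi
  have hpos : 0 < T.parent^[i] v :=
    T.level_pos_iff.1 (by rw [T.level_iterate_parent v hi.le]; omega)
  exact mem_Icc.2 ⟨hpos, (T.iterate_parent_le v hi.le).trans hv⟩

lemma leaves_subset_Icc : T.leaves ⊆ Icc 1 n := filter_subset _ _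

lemma leaves_inter_pathToRoot_subset {v : ℕ} (hv : v ≤ n) :
    T.leaves ∩ T.pathToRoot v ⊆ {v} := by
  intro u hu
  obtain ⟨hleaf, hpath⟩ := mem_inter.1 hu
  obtain ⟨i, hi, rfl⟩ := mem_image.1 hpath
  rcases i with _ | i
  · exact mem_singleton_self v
  have hmem := T.iterate_parent_mem_pathToRoot v (Nat.lt_of_succ_lt (mem_range.1 hi))
  have hchild : T.parent^[i] v ∈ T.children (T.parent^[i + 1] v) :=
    mem_filter.2 ⟨T.pathToRoot_subset hv hmem, (Function.iterate_succ_apply' _ _ _).symm⟩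
  rw [children, (mem_filter.1 hleaf).2] at hchild
  exact absurd hchild (notMem_empty _)

lemma level_add_card_leaves_le {v : ℕ} (hv : v ≤ n) : T.level v + #T.leaves ≤ n + 1 := by
  have hunion : #(T.leaves ∪ T.pathToRoot v) ≤ n := by
    simpa using card_le_card (union_subset T.leaves_subset_Icc (T.pathToRoot_subset hv))
  have hinter : #(T.leaves ∩ T.pathToRoot v) ≤ 1 :=
    (card_le_card (T.leaves_inter_pathToRoot_subset hv)).trans_eq (card_singleton v)
  have := card_union_add_card_inter T.leaves (T.pathToRoot v)
  rw [card_pathToRoot] at this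
  omega

lemma IDI_le_card_leaves_mul : T.IDI ≤ #T.leaves * (n + 1 - #T.leaves) := by
  rw [← smul_eq_mul]
  refine sum_le_card_nsmul _ _ _ fun l hl => ?_
  have := T.level_add_card_leaves_le (mem_Icc.1 (T.leaves_subset_Icc hl)).2
  omega

end RTree

lemma Nat.mul_sub_le_sq_div_four (a m : ℕ) : a * (m - a) ≤ m ^ 2 / 4 := by
  rcases le_total a m with h | h
  · rw [Nat.le_div_iff_mul_le four_pos, mul_comm, ← mul_assoc]
    simpa [Nat.add_sub_cancel' h] using four_mul_le_sq_add a (m - a)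
  · simp [Nat.sub_eq_zero_of_le h]

lemma Nat.succ_sq_div_four (n : ℕ) : (n + 1) ^ 2 / 4 = (1 + (n - 1) / 2) * (n - (n - 1) / 2) := by
  rcases n with _ | m
  · rfl
  obtain ⟨q, rfl | rfl⟩ := Nat.even_or_odd' m
  · have : (2 * q + 1 + 1) ^ 2 = (1 + q) * (q + 1) * 4 := by ring
    grind
  · have : (2 * q + 1 + 1 + 1) ^ 2 = (1 + q) * (q + 2) * 4 + 1 := by ring
    grind

theorem IDI_upper_bound_general (n : ℕ) (T : RTree n) :
    T.IDI ≤ (n + 1) ^ 2 / 4 ∧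
    (n + 1) ^ 2 / 4 = (1 + (n - 1) / 2) * (n - (n - 1) / 2) :=
  ⟨T.IDI_le_card_leaves_mul.trans (Nat.mul_sub_le_sq_div_four _ _), Nat.succ_sq_div_four n⟩

/-- Upper bound: IDI ≤ ⌊(n+1)²/4⌋ = (1 + ⌊(n−1)/2⌋)(n − ⌊(n−1)/2⌋). -/
theorem IDI_upper_bound (n : ℕ) (hn : 1 ≤ n) (T : RTree n) :
    T.IDI ≤ (n + 1) ^ 2 / 4 ∧
    (n + 1) ^ 2 / 4 = (1 + (n - 1) / 2) * (n - (n - 1) / 2) :=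
  IDI_upper_bound_general n T
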